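/- arXiv:2404.14013 — 4 statements merged into one kernel-verified Lean document; each statement's English description precedes it below -/
import Mathlib

section
/- For every real number α with 0 < α < 1 and all positive real numbers s, t with s ≠ t, one has |s^α − t^α| ≤ |s − t|^α ≤ (1/α) · ((s + t)/|s − t|)^{1−α} · |s^α − t^α|. -/
open Real

lemma add_rpow_le' {a b α : ℝ} (ha : 0 ≤ a) (hb : 0 ≤ b) (h0 : 0 ≤ α) (h1 : α ≤ 1) :
    (a + b) ^ α ≤ a ^ α + b ^ α := by
  lift a to NNReal using ha
  lift b to NNReal using hb
  have := NNReal.rpow_add_le_add_rpow a b h0 h1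
  exact_mod_cast this

lemma key (α s t : ℝ) (hα0 : 0 < α) (hα1 : α < 1) (ht : 0 < t) (hlt : t < s) :
    s ^ α - t ^ α ≤ (s - t) ^ α ∧
      (s - t) ^ α ≤ (1 / α) * ((s + t) / (s - t)) ^ (1 - α) * (s ^ α - t ^ α) := by
  have hs : 0 < s := ht.trans hlt
  have hd : 0 < s - t := by linarith
  have hu : 0 < s + t := by linarith
  constructor
  · have h := add_rpow_le' hd.le ht.le hα0.le hα1.le
    rw [sub_add_cancel] at h
    linarith
  · -- Bernoulli: (t/s)^α ≤ 1 + α*(t/s - 1)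
    have hb : (t / s) ^ α ≤ 1 + α * (t / s - 1) := by
      have := rpow_one_add_le_one_add_mul_self (s := t / s - 1)
        (by have : 0 < t / s := div_pos ht hs; linarith) hα0.le hα1.le
      simpa using this
    have hts : (t / s) ^ α = t ^ α / s ^ α := Real.div_rpow ht.le hs.le α
    have hsα : (0:ℝ) < s ^ α := Real.rpow_pos_of_pos hs α
    -- s^α - t^α ≥ α*(s-t)*s^(α-1)
    have h1 : α * (s - t) * s ^ (α - 1) ≤ s ^ α - t ^ α := by
      have h2 : t ^ α ≤ s ^ α * (1 + α * (t / s - 1)) := by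
        rw [hts] at hb
        calc t ^ α = s ^ α * (t ^ α / s ^ α) := by field_simp
        _ ≤ s ^ α * (1 + α * (t / s - 1)) := by
            exact mul_le_mul_of_nonneg_left hb hsα.le
      have h3 : s ^ (α - 1) = s ^ α / s := by
        rw [Real.rpow_sub hs, Real.rpow_one]
      rw [h3]
      have : s ^ α * (1 + α * (t / s - 1)) = s ^ α - α * (s - t) * (s ^ α / s) := by
        field_simp; ring
      rw [this] at h2
      linarith
    -- s^(α-1) ≥ (s+t)^(α-1)
    have h4 : (s + t) ^ (α - 1) ≤ s ^ (α - 1) :=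
      Real.rpow_le_rpow_of_nonpos hs (by linarith) (by linarith)
    have h5 : α * (s - t) ≤ (s + t) ^ (1 - α) * (s ^ α - t ^ α) := by
      have h6 : α * (s - t) * (s + t) ^ (α - 1) ≤ s ^ α - t ^ α := by
        calc α * (s - t) * (s + t) ^ (α - 1) ≤ α * (s - t) * s ^ (α - 1) := by
              apply mul_le_mul_of_nonneg_left h4
              positivity
        _ ≤ s ^ α - t ^ α := h1
      have h7 : (s + t) ^ (1 - α) * (s + t) ^ (α - 1) = 1 := by
        rw [← Real.rpow_add hu]; norm_num
      calc α * (s - t) = α * (s - t) * ((s + t) ^ (1 - α) * (s + t) ^ (α - 1)) := by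
            rw [h7]; ring
      _ = (s + t) ^ (1 - α) * (α * (s - t) * (s + t) ^ (α - 1)) := by ring
      _ ≤ (s + t) ^ (1 - α) * (s ^ α - t ^ α) := by
            apply mul_le_mul_of_nonneg_left h6
            positivity
    have hdiv : ((s + t) / (s - t)) ^ (1 - α) = (s + t) ^ (1 - α) / (s - t) ^ (1 - α) :=
      Real.div_rpow hu.le hd.le (1-α)
    have hdα : (s - t) ^ α = (s - t) / (s - t) ^ (1 - α) := by
      rw [eq_div_iff (ne_of_gt (Real.rpow_pos_of_pos hd _)), ← Real.rpow_add hd]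
      norm_num
    rw [hdα, hdiv]
    rw [div_le_iff₀ (Real.rpow_pos_of_pos hd _)] at *
    have hdpos : (0:ℝ) < (s - t) ^ (1 - α) := Real.rpow_pos_of_pos hd _
    calc s - t = (1 / α) * (α * (s - t)) := by field_simp
    _ ≤ (1 / α) * ((s + t) ^ (1 - α) * (s ^ α - t ^ α)) := by
          apply mul_le_mul_of_nonneg_left h5
          positivity
    _ = 1 / α * ((s + t) ^ (1 - α) / (s - t) ^ (1 - α)) * (s ^ α - t ^ α) * (s - t) ^ (1 - α) := by
          field_simp

theorem stmt0 (α s t : ℝ) (hα0 : 0 < α) (hα1 : α < 1) (hs : 0 < s) (ht : 0 < t)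
    (hst : s ≠ t) :
    |s ^ α - t ^ α| ≤ |s - t| ^ α ∧
      |s - t| ^ α ≤ (1 / α) * ((s + t) / |s - t|) ^ (1 - α) * |s ^ α - t ^ α| := by
  rcases lt_or_gt_of_ne hst with h | h
  · have hk := key α t s hα0 hα1 hs h
    have habs : |s - t| = t - s := by rw [abs_of_neg (by linarith)]; ring
    have habs2 : |s ^ α - t ^ α| = t ^ α - s ^ α := by
      rw [abs_of_nonpos (by
        have : s ^ α ≤ t ^ α := Real.rpow_le_rpow hs.le h.le hα0.le
        linarith)]
      ring
    rw [habs, habs2, add_comm s t]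
    exact hk
  · have hk := key α s t hα0 hα1 ht h
    have habs : |s - t| = s - t := abs_of_pos (by linarith)
    have habs2 : |s ^ α - t ^ α| = s ^ α - t ^ α := by
      rw [abs_of_nonneg (by
        have : t ^ α ≤ s ^ α := Real.rpow_le_rpow ht.le h.le hα0.le
        linarith)]
    rw [habs, habs2]
    exact hk
end

section
/- Let 1 < p < ∞ and define f : ℝ → ℝ by f(x) = x^{−1/p} for x > 0 and f(x) = 0 for x ≤ 0. Then for every A > 0 one has ‖f · 1_{{|x| > A}}‖_{L^{p,∞}(ℝ)} = 1. -/
open MeasureTheory ENNReal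

theorem stmt4 (p : ℝ) (hp : 1 < p) :
    let f : ℝ → ℝ := fun x => if 0 < x then x ^ (-(1 / p)) else 0
    ∀ A : ℝ, 0 < A →
      (⨆ (l : ℝ) (_ : 0 < l),
          ENNReal.ofReal l *
            volume {x : ℝ | l < |{y : ℝ | A < |y|}.indicator f x|} ^ (1 / p)) = 1 := by
  intro f A hA
  have hp0 : (0:ℝ) < p := lt_trans one_pos hp
  have hip : (0:ℝ) < 1 / p := by positivity
  have hnp : -p < 0 := by linarith
  -- the set computation
  have hset : ∀ l : ℝ, 0 < l →
      {x : ℝ | l < |{y : ℝ | A < |y|}.indicator f x|} = Set.Ioo A (l ^ (-p)) := by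
    intro l hl
    ext x
    simp only [Set.mem_setOf_eq, Set.mem_Ioo, Set.indicator]
    constructor
    · intro h
      by_cases hx : A < |x|
      · rw [if_pos hx] at h
        by_cases hx0 : 0 < x
        · simp only [f, if_pos hx0] at h
          have hxA : A < x := by rwa [abs_of_pos hx0] at hx
          refine ⟨hxA, ?_⟩
          have : l < x ^ (-p)⁻¹ := by
            rw [abs_of_nonneg (Real.rpow_nonneg hx0.le _)] at h
            rwa [show (-p)⁻¹ = -(1/p) by rw [one_div, inv_neg]]
          exact (Real.lt_rpow_inv_iff_of_neg hl hx0 hnp).mp this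
        · simp only [f, if_neg hx0, abs_zero] at h; linarith
      · rw [if_neg hx, abs_zero] at h; linarith
    · rintro ⟨hxA, hxl⟩
      have hx0 : 0 < x := lt_trans hA hxA
      have hx : A < |x| := by rwa [abs_of_pos hx0]
      rw [if_pos hx]
      simp only [f, if_pos hx0]
      rw [abs_of_nonneg (Real.rpow_nonneg hx0.le _)]
      have : l < x ^ (-p)⁻¹ := (Real.lt_rpow_inv_iff_of_neg hl hx0 hnp).mpr hxl
      rwa [show (-p)⁻¹ = -(1/p) by rw [one_div, inv_neg]] at this
  -- the term value
  have hterm : ∀ l : ℝ, 0 < l →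
      ENNReal.ofReal l *
        volume {x : ℝ | l < |{y : ℝ | A < |y|}.indicator f x|} ^ (1 / p)
        = ENNReal.ofReal l * ENNReal.ofReal (l ^ (-p) - A) ^ (1 / p) := by
    intro l hl
    rw [hset l hl, Real.volume_Ioo]
  refine le_antisymm ?_ ?_
  · -- upper bound: each term ≤ 1
    refine iSup₂_le fun l hl => ?_
    rw [hterm l hl]
    have h1 : ENNReal.ofReal (l ^ (-p) - A) ^ (1 / p)
        ≤ ENNReal.ofReal (l ^ (-p)) ^ (1 / p) := by
      gcongr
      linarith
    calc ENNReal.ofReal l * ENNReal.ofReal (l ^ (-p) - A) ^ (1 / p)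
        ≤ ENNReal.ofReal l * ENNReal.ofReal (l ^ (-p)) ^ (1 / p) := by gcongr
      _ = 1 := by
          rw [ENNReal.ofReal_rpow_of_nonneg (Real.rpow_nonneg hl.le _) hip.le,
            ← Real.rpow_mul hl.le, ← ENNReal.ofReal_mul hl.le]
          have : l * l ^ (-p * (1 / p)) = 1 := by
            rw [show -p * (1/p) = -1 by field_simp, Real.rpow_neg_one,
              mul_inv_cancel₀ hl.ne']
          rw [this, ENNReal.ofReal_one]
  · -- lower bound
    refine le_of_forall_lt fun c hc => ?_
    have hcne : c ≠ ⊤ := hc.ne_top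
    set r := c.toReal with hr
    have hr1 : r < 1 := by
      rwa [hr, ← ENNReal.toReal_one, ENNReal.toReal_lt_toReal hcne one_ne_top]
    set δ : ℝ := (1 - r) / 2 with hδ
    have hr0 : 0 ≤ r := ENNReal.toReal_nonneg
    have hδ0 : 0 < δ := by simp only [hδ]; linarith
    have hδ1 : δ < 1 := by simp only [hδ]; linarith
    set l : ℝ := (δ / A) ^ (1 / p) with hldef
    have hl : 0 < l := Real.rpow_pos_of_pos (by positivity) _
    have hlnp : l ^ (-p) = A / δ := by
      rw [hldef, ← Real.rpow_mul (by positivity), show 1/p * (-p) = -1 by field_simp,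
        Real.rpow_neg_one, inv_div]
    have key : ENNReal.ofReal l *
        volume {x : ℝ | l < |{y : ℝ | A < |y|}.indicator f x|} ^ (1 / p)
        = ENNReal.ofReal ((1 - δ) ^ (1 / p)) := by
      rw [hterm l hl, hlnp]
      have hsub : A / δ - A = A * (1 - δ) / δ := by field_simp
      rw [hsub, hldef, ← ENNReal.ofReal_rpow_of_nonneg (by positivity : (0:ℝ) ≤ δ / A) hip.le,
        ← ENNReal.mul_rpow_of_nonneg _ _ hip.le,
        ← ENNReal.ofReal_mul (by positivity),
        show δ / A * (A * (1 - δ) / δ) = 1 - δ by field_simp,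
        ENNReal.ofReal_rpow_of_nonneg (by linarith) hip.le]
    have hge : ENNReal.ofReal (1 - δ) ≤ ENNReal.ofReal ((1 - δ) ^ (1 / p)) := by
      apply ENNReal.ofReal_le_ofReal
      calc (1 - δ) = (1 - δ) ^ (1:ℝ) := (Real.rpow_one _).symm
        _ ≤ (1 - δ) ^ (1/p) := by
            apply Real.rpow_le_rpow_of_exponent_ge (by linarith) (by linarith)
            rw [div_le_one hp0]; linarith
    have hclt : c < ENNReal.ofReal (1 - δ) := by
      conv_lhs => rw [← ENNReal.ofReal_toReal hcne]
      rw [ENNReal.ofReal_lt_ofReal_iff (by linarith)]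
      simp only [hδ]; linarith
    calc c < ENNReal.ofReal (1 - δ) := hclt
      _ ≤ ENNReal.ofReal ((1 - δ) ^ (1 / p)) := hge
      _ = _ := key.symm
      _ ≤ _ := le_iSup₂ (f := fun l (_ : 0 < l) => ENNReal.ofReal l *
          volume {x : ℝ | l < |{y : ℝ | A < |y|}.indicator f x|} ^ (1 / p)) l hl
end

section
/- Let 1 < p < ∞ and define f : ℝ → ℝ by f(x) = x^{−1/p} for x > 0 and f(x) = 0 for x ≤ 0. Then for every h > 0 the translate τ_h f(x) := f(x − h) satisfies ‖τ_h f − f‖_{L^{p,∞}(ℝ)} ≥ 1. -/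
open MeasureTheory ENNReal Filter

theorem stmt5 (p : ℝ) (hp : 1 < p) :
    let f : ℝ → ℝ := fun x => if 0 < x then x ^ (-(1 / p)) else 0
    ∀ h : ℝ, 0 < h →
      1 ≤ ⨆ (l : ℝ) (_ : 0 < l),
          ENNReal.ofReal l * volume {x : ℝ | l < |f (x - h) - f x|} ^ (1 / p) := by
  intro f h hh
  set c : ℝ := h ^ (-(1/p)) with hc
  have hc0 : 0 < c := Real.rpow_pos_of_pos hh _
  have hp0 : 0 < p := lt_trans one_pos hp
  have key : ∀ l : ℝ, 0 < l →
      ENNReal.ofReal (l / (l + c)) ≤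
        ENNReal.ofReal l * volume {x : ℝ | l < |f (x - h) - f x|} ^ (1 / p) := by
    intro l hl
    have hlc : 0 < l + c := by linarith
    set t : ℝ := (l + c) ^ (-p) with ht
    have ht0 : 0 < t := Real.rpow_pos_of_pos hlc _
    have hexp : (-p) * (-(1/p)) = 1 := by field_simp
    have htpow : t ^ (-(1/p)) = l + c := by
      rw [ht, ← Real.rpow_mul hlc.le, hexp, Real.rpow_one]
    have hsub : Set.Ioo h (h + t) ⊆ {x : ℝ | l < |f (x - h) - f x|} := by
      intro x hx
      obtain ⟨hx1, hx2⟩ := hx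
      have hxh : 0 < x - h := by linarith
      have hxht : x - h < t := by linarith
      have hx0 : 0 < x := lt_trans hh hx1
      have hf1 : f (x - h) = (x - h) ^ (-(1/p)) := if_pos hxh
      have hf2 : f x = x ^ (-(1/p)) := if_pos hx0
      have h1 : t ^ (-(1/p)) < (x - h) ^ (-(1/p)) :=
        Real.rpow_lt_rpow_of_neg hxh hxht (neg_lt_zero.mpr (by positivity))
      have h2 : x ^ (-(1/p)) ≤ c :=
        Real.rpow_le_rpow_of_nonpos hh hx1.le (neg_nonpos.mpr (by positivity))
      have hdiff : l < f (x - h) - f x := by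
        rw [hf1, hf2]; rw [htpow] at h1; linarith
      exact lt_of_lt_of_le hdiff (le_abs_self _)
    have hmeas : ENNReal.ofReal t ≤ volume {x : ℝ | l < |f (x - h) - f x|} := by
      calc ENNReal.ofReal t = volume (Set.Ioo h (h + t)) := by
            rw [Real.volume_Ioo]; ring_nf
        _ ≤ _ := measure_mono hsub
    calc ENNReal.ofReal (l / (l + c))
        = ENNReal.ofReal l * ENNReal.ofReal ((l + c)⁻¹) := by
          rw [← ENNReal.ofReal_mul hl.le, div_eq_mul_inv]
      _ = ENNReal.ofReal l * ENNReal.ofReal (t ^ (1/p)) := by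
          rw [show t ^ (1/p) = (l+c)⁻¹ by
            rw [ht, ← Real.rpow_mul hlc.le, show -p * (1/p) = -1 by field_simp,
              Real.rpow_neg_one]]
      _ = ENNReal.ofReal l * ENNReal.ofReal t ^ (1/p) := by
          rw [← ENNReal.ofReal_rpow_of_pos ht0]
      _ ≤ ENNReal.ofReal l * volume {x : ℝ | l < |f (x - h) - f x|} ^ (1/p) := by
          gcongr
  rw [le_iSup_iff]
  intro b hb
  have hb' : ∀ l : ℝ, 0 < l → ENNReal.ofReal (l / (l + c)) ≤ b := fun l hl =>
    (key l hl).trans (by have := hb l; rwa [iSup_pos hl] at this)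
  have htend : Tendsto (fun l : ℝ => ENNReal.ofReal (l / (l + c))) atTop (nhds 1) := by
    have h1 : Tendsto (fun l : ℝ => l / (l + c)) atTop (nhds 1) := by
      have := Filter.Tendsto.div_atTop (f := fun _ : ℝ => c) (l := atTop)
        tendsto_const_nhds (tendsto_atTop_add_const_right _ c tendsto_id)
      have h2 : Tendsto (fun l : ℝ => 1 - c / (l + c)) atTop (nhds 1) := by
        simpa using tendsto_const_nhds.sub this
      refine h2.congr' ?_
      filter_upwards [eventually_gt_atTop 0] with l hl
      field_simp
      ring
    simpa using (ENNReal.tendsto_ofReal h1)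
  refine le_of_tendsto htend ?_
  filter_upwards [eventually_gt_atTop 0] with l hl using hb' l hl
end

section
/- Let 1 < p < ∞ and define f : ℝ → ℝ by f(x) = x^{−1/p} for x > 0 and f(x) = 0 for x ≤ 0. For r > 0 set ⟨f⟩_{B(x,r)} := (1/(2r)) ∫_{x−r}^{x+r} f(y) dy. Then for every r > 0 one has ‖f − ⟨f⟩_{B(·,r)}‖_{L^{p,∞}(ℝ)} ≥ 1/2. -/
open MeasureTheory ENNReal Set

theorem stmt6 (p : ℝ) (hp : 1 < p) :
    let f : ℝ → ℝ := fun x => if 0 < x then x ^ (-(1 / p)) else 0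
    ∀ r : ℝ, 0 < r →
      ENNReal.ofReal (1 / 2) ≤
        ⨆ (l : ℝ) (_ : 0 < l),
          ENNReal.ofReal l *
            volume {x : ℝ |
              l < |f x - (1 / (2 * r)) * ∫ y in (x - r)..(x + r), f y|} ^ (1 / p) := by
  intro f r hr
  have hp0 : 0 < p := lt_trans one_pos hp
  have hq : 0 < 1 - 1 / p := by
    have : 1 / p < 1 := by rw [div_lt_one hp0]; exact hp
    linarith
  set q : ℝ := 1 - 1 / p with hqdef
  have hm1 : (-1 : ℝ) < -(1 / p) := by
    have : 1 / p < 1 := by rw [div_lt_one hp0]; exact hp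
    linarith
  set A : ℝ := (2 * r) ^ q / (2 * r * q) with hA
  set l : ℝ := max A (max (r ^ (-(1 / p)) / 2) 1) with hl
  have hl1 : (1 : ℝ) ≤ l := le_trans (le_max_right _ _) (le_max_right _ _)
  have hlpos : 0 < l := lt_of_lt_of_le one_pos hl1
  have hAl : A ≤ l := le_max_left _ _
  have h2l : 0 < 2 * l := by linarith
  set δ : ℝ := (2 * l) ^ (-p) with hδ
  have hδpos : 0 < δ := Real.rpow_pos_of_pos h2l _
  have hδr : δ ≤ r := by
    have h1 : r ^ (-(1 / p)) ≤ 2 * l := by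
      have h2 : r ^ (-(1 / p)) / 2 ≤ l :=
        le_trans (le_max_left _ _) (le_max_right A _)
      linarith
    calc δ ≤ (r ^ (-(1 / p))) ^ (-p) :=
          Real.rpow_le_rpow_of_nonpos (Real.rpow_pos_of_pos hr _) h1 (by linarith)
      _ = r := by
          rw [← Real.rpow_mul hr.le, show (-(1 / p)) * (-p) = 1 by field_simp,
            Real.rpow_one]
  -- main pointwise claim
  have hsub : Ioo (0 : ℝ) δ ⊆
      {x : ℝ | l < |f x - (1 / (2 * r)) * ∫ y in (x - r)..(x + r), f y|} := by
    intro x hx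
    obtain ⟨hx0, hxδ⟩ := hx
    have hxr : x < r := lt_of_lt_of_le hxδ hδr
    have hxr0 : 0 < x + r := by linarith
    have hEq : Set.EqOn f (fun y => y ^ (-(1 / p))) (Set.uIcc 0 (x + r)) := by
      intro y hy
      rw [Set.uIcc_of_le hxr0.le] at hy
      rcases lt_or_eq_of_le hy.1 with h | h
      · simp [f, h]
      · rw [← h]
        simp only [f, lt_irrefl, if_false]
        exact (Real.zero_rpow (neg_ne_zero.mpr (one_div_pos.mpr hp0).ne')).symm
    have hEq0 : Set.EqOn f (fun _ => (0 : ℝ)) (Set.uIcc (x - r) 0) := by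
      intro y hy
      rw [Set.uIcc_of_le (by linarith)] at hy
      simp [f, not_lt.mpr hy.2]
    have hint2 : IntervalIntegrable f volume 0 (x + r) := by
      rw [intervalIntegrable_iff']
      exact ((intervalIntegrable_iff').mp
        (intervalIntegral.intervalIntegrable_rpow' hm1)).congr_fun
        (fun y hy => (hEq hy).symm) measurableSet_uIcc
    have hint1 : IntervalIntegrable f volume (x - r) 0 := by
      rw [intervalIntegrable_iff']
      exact ((integrableOn_const_iff (C := (0 : ℝ))).mpr (Or.inl (by simp))).congr_fun
        (fun y hy => (hEq0 hy).symm) measurableSet_uIcc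
    have hI1 : (∫ y in (x - r)..0, f y) = 0 := by
      rw [intervalIntegral.integral_congr hEq0]
      simp
    have hI2 : (∫ y in (0 : ℝ)..(x + r), f y) = (x + r) ^ q / q := by
      rw [intervalIntegral.integral_congr hEq, integral_rpow (Or.inl hm1),
        show -(1 / p) + 1 = q by rw [hqdef]; ring,
        Real.zero_rpow hq.ne', sub_zero]
    have hsplit : (∫ y in (x - r)..(x + r), f y) = (x + r) ^ q / q := by
      rw [← intervalIntegral.integral_add_adjacent_intervals hint1 hint2, hI1, hI2]
      ring
    have havg : (1 / (2 * r)) * ∫ y in (x - r)..(x + r), f y = (x + r) ^ q / (2 * r * q) := by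
      rw [hsplit]; field_simp
    have havg_le : (1 / (2 * r)) * (∫ y in (x - r)..(x + r), f y) ≤ A := by
      rw [havg, hA]
      exact (div_le_div_iff_of_pos_right (by positivity)).mpr
        (Real.rpow_le_rpow hxr0.le (by linarith) hq.le)
    have havg_nonneg : 0 ≤ (1 / (2 * r)) * ∫ y in (x - r)..(x + r), f y := by
      rw [havg]; positivity
    have hfx : 2 * l < f x := by
      have h1 : δ ^ (-(1 / p)) < x ^ (-(1 / p)) :=
        Real.rpow_lt_rpow_of_neg hx0 hxδ (by linarith [one_div_pos.mpr hp0])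
      have h2 : δ ^ (-(1 / p)) = 2 * l := by
        rw [hδ, ← Real.rpow_mul h2l.le, show (-p) * (-(1 / p)) = 1 by field_simp,
          Real.rpow_one]
      have : f x = x ^ (-(1 / p)) := by simp [f, hx0]
      rw [this, ← h2]; exact h1
    have : l < f x - (1 / (2 * r)) * ∫ y in (x - r)..(x + r), f y := by
      have := havg_le
      nlinarith [hAl]
    exact lt_of_lt_of_le this (le_abs_self _)
  -- conclude
  refine le_trans ?_ (le_iSup₂ (f := fun (l : ℝ) (_ : 0 < l) =>
    ENNReal.ofReal l * volume {x : ℝ |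
      l < |f x - (1 / (2 * r)) * ∫ y in (x - r)..(x + r), f y|} ^ (1 / p)) l hlpos)
  have hvol : ENNReal.ofReal δ ≤
      volume {x : ℝ | l < |f x - (1 / (2 * r)) * ∫ y in (x - r)..(x + r), f y|} := by
    calc ENNReal.ofReal δ = volume (Ioo (0 : ℝ) δ) := by rw [Real.volume_Ioo, sub_zero]
      _ ≤ _ := measure_mono hsub
  have hkey : ENNReal.ofReal (1 / 2) = ENNReal.ofReal l * ENNReal.ofReal δ ^ (1 / p) := by
    rw [ENNReal.ofReal_rpow_of_pos hδpos, ← ENNReal.ofReal_mul hlpos.le]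
    congr 1
    rw [hδ, ← Real.rpow_mul h2l.le, show (-p) * (1 / p) = -1 by field_simp,
      Real.rpow_neg_one]
    field_simp
  rw [hkey]
  gcongr
end
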